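/- For every real ε ∈ (0,1) and all integers s, t ≥ 2, there exists a set A of st positive integers and a real number x such that the open interval (x, x + (3 − ε)·max A) contains at most s + t distinct integers that are multiples of some element of A. -/

import Mathlib

/-!
Take `A = {M + (i + j(s+1))Q : 1 ≤ i ≤ s, 1 ≤ j ≤ t}` with `Q = N!`, `N = s + t(s+1)`, and
`M ≡ 1 (mod Q)` large. Two distinct indices differ by at most `N`, so a common prime factor of
two elements of `A` would divide `Q` and hence `M`; thus `A` is pairwise coprime and the Chinese
remainder theorem gives `w` with `M + (i + j(s+1))Q ∣ w - iQ` for all `i, j`. The window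
`(w - M, w + 2M)` is longer than `(3 - ε) max A`, and the only multiples of `M + (i + j(s+1))Q`
in it are `w - iQ` and `w + M + j(s+1)Q`: the first depends only on `i`, the second only on `j`.
-/

open Finset Nat

theorem Nat.coprime_add_mul_factorial {c m n N : ℕ} (hc : Coprime c N !) (hmn : m ≠ n)
    (hm : m ≤ N) (hn : n ≤ N) : Coprime (c + m * N !) (c + n * N !) := by
  wlog hlt : m < n generalizing m n
  · exact (this hmn.symm hn hm (by omega)).symm
  refine Nat.coprime_of_dvd fun p hp hpm hpn => hp.one_lt.ne' ?_
  have hsplit : c + n * N ! = c + m * N ! + (n - m) * N ! := by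
    rw [add_assoc, ← add_mul, Nat.add_sub_cancel' hlt.le]
  have hpQ : p ∣ N ! := by
    rcases hp.dvd_mul.mp ((Nat.dvd_add_right hpm).mp (hsplit ▸ hpn)) with hpd | hpQ
    · exact hp.dvd_factorial.mpr ((Nat.le_of_dvd (by omega) hpd).trans (by omega))
    · exact hpQ
  have hpc : p ∣ c := (Nat.dvd_add_left (dvd_mul_of_dvd_right hpQ m)).mp hpm
  exact (Nat.Coprime.coprime_dvd_left hpc hc).eq_one_of_dvd hpQ

theorem Int.eq_or_eq_add_of_dvd_sub {a b r : ℤ} (h : a ∣ b - r) (hlo : r - a < b)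
    (hhi : b < r + 2 * a) : b = r ∨ b = r + a := by
  obtain ⟨k, hk⟩ := h
  have hk0 : -1 < k := by nlinarith
  have hk1 : k < 2 := by nlinarith
  obtain rfl | rfl : k = 0 ∨ k = 1 := by omega
  · left; linarith
  · right; linarith

def gridIndex (s : ℕ) (p : ℕ × ℕ) : ℕ := p.1 + p.2 * (s + 1)

theorem gridIndex_injOn (s : ℕ) : Set.InjOn (gridIndex s) {p | p.1 ≤ s} := by
  intro p hp q hq h
  have hmod := congrArg (· % (s + 1)) h
  have hdiv := congrArg (· / (s + 1)) h
  simp only [gridIndex, Nat.add_mul_mod_self_right, Nat.add_mul_div_right _ _ s.succ_pos]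
    at hmod hdiv
  rw [Nat.mod_eq_of_lt (Nat.lt_succ_of_le hp), Nat.mod_eq_of_lt (Nat.lt_succ_of_le hq)] at hmod
  rw [Nat.div_eq_of_lt (Nat.lt_succ_of_le hp), Nat.div_eq_of_lt (Nat.lt_succ_of_le hq)] at hdiv
  exact Prod.ext hmod (by simpa using hdiv)

theorem gridIndex_le {s t : ℕ} {p : ℕ × ℕ} (hp : p ∈ Icc 1 s ×ˢ Icc 1 t) :
    gridIndex s p ≤ s + t * (s + 1) := by
  simp only [mem_product, mem_Icc] at hp
  exact Nat.add_le_add hp.1.2 (Nat.mul_le_mul_right _ hp.2.2)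

section Grid

variable {s t M Q : ℕ}

theorem fst_le_of_mem_grid {p : ℕ × ℕ} (hp : p ∈ Icc 1 s ×ˢ Icc 1 t) : p.1 ≤ s :=
  (mem_Icc.mp (mem_product.mp hp).1).2

def gridElt (s M Q : ℕ) (p : ℕ × ℕ) : ℕ := M + gridIndex s p * Q

def gridSet (s t M Q : ℕ) : Finset ℕ := (Icc 1 s ×ˢ Icc 1 t).image (gridElt s M Q)

theorem card_gridSet (hQ : 0 < Q) : #(gridSet s t M Q) = s * t := by
  have hinj : Set.InjOn (gridElt s M Q) ↑(Icc 1 s ×ˢ Icc 1 t) := fun p hp q hq h =>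
    gridIndex_injOn s (fst_le_of_mem_grid hp) (fst_le_of_mem_grid hq)
      (Nat.eq_of_mul_eq_mul_right hQ (Nat.add_left_cancel h))
  rw [gridSet, Finset.card_image_of_injOn hinj, card_product, Nat.card_Icc, Nat.card_Icc]
  simp

theorem pos_of_mem_gridSet (hM : 0 < M) {a : ℕ} (ha : a ∈ gridSet s t M Q) : 0 < a := by
  obtain ⟨p, -, rfl⟩ := mem_image.mp ha
  exact Nat.add_pos_left hM _

theorem sup_gridSet_le : (gridSet s t M Q).sup id ≤ M + (s + t * (s + 1)) * Q :=
  Finset.sup_le fun _ ha => by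
    obtain ⟨p, hp, rfl⟩ := mem_image.mp ha
    exact Nat.add_le_add_left (Nat.mul_le_mul_right _ (gridIndex_le hp)) M

theorem exists_dvd_sub_gridElt (hM : 0 < M) (hcop : Coprime M (s + t * (s + 1))!) :
    ∃ w : ℤ, ∀ p ∈ Icc 1 s ×ˢ Icc 1 t,
      (gridElt s M (s + t * (s + 1))! p : ℤ) ∣ w - p.1 * (s + t * (s + 1))! := by
  have hpair : (↑(Icc 1 s ×ˢ Icc 1 t) : Set (ℕ × ℕ)).Pairwise
      (Function.onFun Coprime (gridElt s M (s + t * (s + 1))!)) := fun p hp q hq hpq =>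
    Nat.coprime_add_mul_factorial hcop
      (fun h => hpq (gridIndex_injOn s (fst_le_of_mem_grid hp) (fst_le_of_mem_grid hq) h))
      (gridIndex_le hp) (gridIndex_le hq)
  obtain ⟨w, hw⟩ := chineseRemainderOfFinset (fun p => p.1 * (s + t * (s + 1))!) _ _
    (fun p _ => (Nat.add_pos_left hM _).ne') hpair
  exact ⟨w, fun p hp => by exact_mod_cast (Nat.modEq_iff_dvd.mp (hw p hp).symm)⟩

def windowSet (s t M Q : ℕ) (w : ℤ) : Finset ℤ :=
  (Icc 1 s).image (fun i : ℕ => w - i * Q) ∪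
    (Icc 1 t).image (fun j : ℕ => w + M + j * (s + 1) * Q)

theorem card_windowSet_le (w : ℤ) : #(windowSet s t M Q w) ≤ s + t :=
  (card_union_le _ _).trans <| by
    simpa using Nat.add_le_add (card_image_le (s := Icc 1 s)) (card_image_le (s := Icc 1 t))

theorem mem_windowSet_of_dvd {w b : ℤ}
    (hw : ∀ p ∈ Icc 1 s ×ˢ Icc 1 t, (gridElt s M Q p : ℤ) ∣ w - p.1 * Q)
    (hlo : w - M < b) (hhi : b < w + 2 * M) {a : ℕ} (ha : a ∈ gridSet s t M Q)
    (hab : (a : ℤ) ∣ b) :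
    b ∈ windowSet s t M Q w := by
  obtain ⟨p, hp, rfl⟩ := mem_image.mp ha
  have hpi := mem_product.mp hp
  have helt : (gridElt s M Q p : ℤ) = M + (p.1 + p.2 * (s + 1)) * Q := by
    simp [gridElt, gridIndex]
  have hnn : (0 : ℤ) ≤ p.1 * Q ∧ (0 : ℤ) ≤ p.2 * (s + 1) * Q :=
    ⟨by positivity, by positivity⟩
  rcases Int.eq_or_eq_add_of_dvd_sub (dvd_sub hab (hw p hp)) (by linarith) (by linarith)
    with h | h
  · exact mem_union_left _ (mem_image.mpr ⟨p.1, hpi.1, h.symm⟩)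
  · exact mem_union_right _ (mem_image.mpr ⟨p.2, hpi.2, by rw [h]; linarith⟩)

end Grid

theorem three_sub_mul_le {ε m y z : ℝ} (hε0 : 0 ≤ ε) (hε3 : ε ≤ 3) (hy0 : 0 ≤ y)
    (hy : 3 * y ≤ ε * m) (hz : z ≤ m + y) : (3 - ε) * z ≤ 3 * m := by
  nlinarith [mul_le_mul_of_nonneg_left hz (by linarith : 0 ≤ 3 - ε), mul_nonneg hε0 hy0]

theorem upper_bound_3_eps_general (ε : ℝ) (hε0 : 0 < ε) (hε1 : ε < 1)
    (s t : ℕ) :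
    ∃ (A : Finset ℕ) (x : ℝ), A.card = s * t ∧ (∀ a ∈ A, 0 < a) ∧
      ∃ T : Finset ℤ, T.card ≤ s + t ∧
        ∀ b : ℤ, x < (b : ℝ) → (b : ℝ) < x + (3 - ε) * (A.sup id : ℕ) →
          (∃ a ∈ A, (a : ℤ) ∣ b) → b ∈ T := by
  set N := s + t * (s + 1)
  obtain ⟨K, hK⟩ := exists_nat_gt (3 * N / ε)
  set M := 1 + K * (N !)
  have hM : 0 < M := by positivity
  obtain ⟨w, hw⟩ := exists_dvd_sub_gridElt (s := s) (t := t) hM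
    ((coprime_add_mul_right_left _ _ _).mpr (coprime_one_left _))
  refine ⟨gridSet s t M (N !), w - M, card_gridSet N.factorial_pos,
    fun _ => pos_of_mem_gridSet hM, windowSet s t M (N !) w, card_windowSet_le w, ?_⟩
  rintro b hlo hhi ⟨a, ha, hab⟩
  have hMlarge : 3 * (N * N ! : ℝ) ≤ ε * M := by
    rw [div_lt_iff₀ hε0] at hK
    have hMR : (M : ℝ) = 1 + K * N ! := by push_cast [M]; ring
    rw [hMR]
    nlinarith [mul_le_mul_of_nonneg_right hK.le (by positivity : (0 : ℝ) ≤ N !)]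
  have hsup : (3 - ε) * ((gridSet s t M (N !)).sup id : ℕ) ≤ 3 * (M : ℝ) :=
    three_sub_mul_le hε0.le (by linarith) (by positivity) hMlarge
      (by exact_mod_cast sup_gridSet_le)
  exact mem_windowSet_of_dvd hw (by exact_mod_cast hlo)
    (by exact_mod_cast (by linarith : (b : ℝ) < w + 2 * M)) ha hab

/-- For every `ε ∈ (0,1)` and integers `s, t ≥ 2`, there is a set `A` of `st` positive
integers and a real `x` such that `(x, x + (3 - ε) * max A)` contains at most `s + t`
distinct integers that are multiples of some element of `A`. -/
theorem upper_bound_3_eps (ε : ℝ) (hε0 : 0 < ε) (hε1 : ε < 1)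
    (s t : ℕ) (hs : 2 ≤ s) (ht : 2 ≤ t) :
    ∃ (A : Finset ℕ) (x : ℝ), A.card = s * t ∧ (∀ a ∈ A, 0 < a) ∧
      ∃ T : Finset ℤ, T.card ≤ s + t ∧
        ∀ b : ℤ, x < (b : ℝ) → (b : ℝ) < x + (3 - ε) * (A.sup id : ℕ) →
          (∃ a ∈ A, (a : ℤ) ∣ b) → b ∈ T :=
  upper_bound_3_eps_general ε hε0 hε1 s t
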